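/- arXiv:2302.07063 — 3 statements merged into one kernel-verified Lean document; each statement's English description precedes it below -/
import Mathlib

section
/- Let S be a decision rule system, C ∈ {AR, AD, SR}, and Γ an e-decision tree over S solving the extended problem EC(S). Then the o-decision tree o(Γ), obtained from Γ by removing all nodes reachable only via an edge labeled with *, solves the problem C(S). -/
open scoped Classical
noncomputable section

/-- Attributes are natural numbers. -/
abbrev Attr := ℕ
/-- A value in an equation system: `some δ` is a number, `none` is the special symbol `*`. -/
abbrev Val := Option ℕ
/-- A decision rule: left-hand side (set of equations attribute = numeric value) and
right-hand side (decision). -/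
abbrev Rule := Finset (Attr × ℕ) × ℕ
/-- An equation system over attributes with possibly `*` values. -/
abbrev EqSys := Finset (Attr × Val)
/-- A decision rule system. -/
abbrev DRS := Finset Rule

/-- The equation system `K(r)` of a rule. -/
def Kr (r : Rule) : EqSys := r.1.image fun p => (p.1, some p.2)
/-- The set `A(r)` of attributes of a rule. -/
def Ar (r : Rule) : Finset Attr := r.1.image Prod.fst
/-- The length of a rule. -/
def ruleLen (r : Rule) : ℕ := r.1.card
/-- Well-formed rule: attributes in the left-hand side are pairwise different. -/
def WFRule (r : Rule) : Prop := ∀ p ∈ r.1, ∀ q ∈ r.1, p.1 = q.1 → p.2 = q.2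
/-- Well-formed decision rule system: a finite nonempty set of well-formed rules. -/
def WFS (S : DRS) : Prop := S.Nonempty ∧ ∀ r ∈ S, WFRule r

/-- `A(S)`: attributes of a system. -/
def AS (S : DRS) : Finset Attr := S.biUnion Ar
/-- `n(S) = |A(S)|`. -/
def nS (S : DRS) : ℕ := (AS S).card
/-- `d(S)`: the maximum length of a rule in `S`. -/
def dS (S : DRS) : ℕ := S.sup ruleLen
/-- `V_S(a)`: values of attribute `a` occurring in `S`. -/
def VS (S : DRS) (a : Attr) : Finset ℕ :=
  S.biUnion fun r => (r.1.filter fun p => p.1 = a).image Prod.snd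
/-- `k(S)`: maximum number of values of a single attribute. -/
def kS (S : DRS) : ℕ := (AS S).sup fun a => (VS S a).card

/-- Branching sets of o-decision trees: `V_S(a)`. -/
def Bo (S : DRS) (a : Attr) : Finset Val := (VS S a).image some
/-- Branching sets of e-decision trees: `EV_S(a) = V_S(a) ∪ {*}`. -/
def Be (S : DRS) (a : Attr) : Finset Val := insert none (Bo S a)

/-- Consistency of an equation system. -/
def Consistent (K : EqSys) : Prop := ∀ p ∈ K, ∀ q ∈ K, p.1 = q.1 → p.2 = q.2

/-- Decision trees: terminal nodes labeled with sets of rules, working nodes labeled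
with an attribute and having a child for each possible value (only children whose
labels lie in the relevant branching set are meaningful). -/
inductive DTree where
  | leaf : DRS → DTree
  | node : Attr → (Val → DTree) → DTree

/-- Depth of a decision tree with respect to branching sets `B`. -/
def depthT (B : Attr → Finset Val) : DTree → ℕ
  | .leaf _ => 0
  | .node a c => ((B a).sup fun v => depthT B (c v)) + 1

/-- A decision tree over a system `S` (with branching sets `B`). -/
def TreeOver (B : Attr → Finset Val) (S : DRS) : DTree → Prop
  | .leaf Z => Z ⊆ S
  | .node a c => a ∈ AS S ∧ ∀ v ∈ B a, TreeOver B S (c v)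

/-- `PathT B Γ K Z`: there is a complete path in `Γ` (following edges with labels
in the branching sets `B`) with equation system `K` and terminal label `Z`. -/
inductive PathT (B : Attr → Finset Val) : DTree → EqSys → DRS → Prop
  | leaf (Z : DRS) : PathT B (.leaf Z) ∅ Z
  | node (a : Attr) (c : Val → DTree) (v : Val) (K : EqSys) (Z : DRS) :
      v ∈ B a → PathT B (c v) K Z → PathT B (.node a c) (insert (a, v) K) Z

/-- `Γ` solves the problem given by correctness condition `cond` on (K(ξ), τ(ξ)). -/
def Solves (cond : EqSys → DRS → Prop) (B : Attr → Finset Val) (Γ : DTree) : Prop :=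
  ∀ K Z, PathT B Γ K Z → Consistent K → cond K Z

/-- Correctness condition for the All Rules problem. -/
def CondAR (S : DRS) (K : EqSys) (Z : DRS) : Prop :=
  (∀ r ∈ Z, Kr r ⊆ K) ∧ ∀ r ∈ S, r ∉ Z → ¬ Consistent (Kr r ∪ K)
/-- Correctness condition for the All Decisions problem. -/
def CondAD (S : DRS) (K : EqSys) (Z : DRS) : Prop :=
  (∀ r ∈ Z, Kr r ⊆ K) ∧ ∀ r ∈ S, r.2 ∉ Z.image Prod.snd → ¬ Consistent (Kr r ∪ K)
/-- Correctness condition for the Some Rules problem. -/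
def CondSR (S : DRS) (K : EqSys) (Z : DRS) : Prop :=
  (∀ r ∈ Z, Kr r ⊆ K) ∧ (Z = ∅ → ∀ r ∈ S, ¬ Consistent (Kr r ∪ K))

/-- Minimum depth of a decision tree over `S` solving the given problem. -/
def hgen (cond : DRS → EqSys → DRS → Prop) (B : DRS → Attr → Finset Val) (S : DRS) : ℕ :=
  sInf {m | ∃ Γ, TreeOver (B S) S Γ ∧ Solves (cond S) (B S) Γ ∧ depthT (B S) Γ = m}

def hAR (S : DRS) : ℕ := hgen CondAR Bo S
def hEAR (S : DRS) : ℕ := hgen CondAR Be S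
def hAD (S : DRS) : ℕ := hgen CondAD Bo S
def hEAD (S : DRS) : ℕ := hgen CondAD Be S
def hSR (S : DRS) : ℕ := hgen CondSR Bo S
def hESR (S : DRS) : ℕ := hgen CondSR Be S

/-- SR-reduced system. -/
def SRred (S : DRS) : Prop := ∀ r ∈ S, ¬ ∃ r' ∈ S, r'.1 ⊂ r.1
/-- AD-reduced system. -/
def ADred (S : DRS) : Prop := ∀ r ∈ S, ¬ ∃ r' ∈ S, r'.1 ⊂ r.1 ∧ r'.2 = r.2
/-- `R_SR(S)`. -/
def RSR (S : DRS) : DRS := S.filter fun r => ¬ ∃ r' ∈ S, r'.1 ⊂ r.1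
/-- `R_AD(S)`. -/
def RAD (S : DRS) : DRS := S.filter fun r => ¬ ∃ r' ∈ S, r'.1 ⊂ r.1 ∧ r'.2 = r.2

/-- `h_C(n,d,k)`: minimum of `h S` over systems with the given parameters. -/
def hmin (h : DRS → ℕ) (n d k : ℕ) : ℕ :=
  sInf {m | ∃ S, WFS S ∧ nS S = n ∧ dS S = d ∧ kS S = k ∧ h S = m}
/-- `H_C(n,d,k)`: maximum of `h S` over systems with the given parameters. -/
def Hmax (h : DRS → ℕ) (n d k : ℕ) : ℕ :=
  sSup {m | ∃ S, WFS S ∧ nS S = n ∧ dS S = d ∧ kS S = k ∧ h S = m}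
/-- `h_C^R(n,d,k)`: minimum of `h S` over reduced systems (`P`) with given parameters. -/
def hminR (h : DRS → ℕ) (P : DRS → Prop) (n d k : ℕ) : ℕ :=
  sInf {m | ∃ S, WFS S ∧ P S ∧ nS S = n ∧ dS S = d ∧ kS S = k ∧ h S = m}
/-- `H_C^R(n,d,k)`: maximum of `h S` over reduced systems (`P`) with given parameters. -/
def HmaxR (h : DRS → ℕ) (P : DRS → Prop) (n d k : ℕ) : ℕ :=
  sSup {m | ∃ S, WFS S ∧ P S ∧ nS S = n ∧ dS S = d ∧ kS S = k ∧ h S = m}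

/-- Node cover of the hypergraph `G(S)`. -/
def NodeCover (S : DRS) (B : Finset Attr) : Prop :=
  B ⊆ AS S ∧ ∀ r ∈ S, Ar r ≠ ∅ → (Ar r ∩ B).Nonempty
/-- `β(S)`: minimum cardinality of a node cover of `G(S)`. -/
def nodeCoverNum (S : DRS) : ℕ := sInf {m | ∃ B, NodeCover S B ∧ B.card = m}

/-- `I_SR(S)`. -/
def ISR (S : DRS) : DRS := if ∀ r ∈ S, r.1 ≠ ∅ then S else S.filter fun r => r.1 = ∅
/-- `D_0(S)`: right-hand sides of length-0 rules. -/
def D0 (S : DRS) : Finset ℕ := (S.filter fun r => r.1 = ∅).image Prod.snd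
/-- `I_AD(S)`. -/
def IAD (S : DRS) : DRS := S.filter fun r => r.1 = ∅ ∨ r.2 ∉ D0 S

/-- `K(S, δ̄)` for an assignment `f` of numeric values to all attributes of `S`. -/
def KStuple (S : DRS) (f : Attr → ℕ) : EqSys := (AS S).image fun a => (a, some (f a))
/-- An incomplete decision rule system. -/
def IncompleteS (S : DRS) : Prop :=
  ∃ f : Attr → ℕ, (∀ a ∈ AS S, f a ∈ VS S a) ∧ ∀ r ∈ S, ¬ Consistent (Kr r ∪ KStuple S f)

/-- `r_α`: remove from the left-hand side of `r` all equations belonging to `α`. -/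
def resRule (α : EqSys) (r : Rule) : Rule :=
  (r.1.filter fun p => (p.1, (some p.2 : Val)) ∉ α, r.2)
/-- `S_α`: rules `r_α` for the rules `r ∈ S` with `K(r) ∪ α` consistent. -/
def Sres (α : EqSys) (S : DRS) : DRS :=
  (S.filter fun r => Consistent (Kr r ∪ α)).image (resRule α)

/-- Value chosen at a node labeled by an attribute `a ∉ A(S_α)` when building `Γ_α`:
the `α`-value of `a` if `a` occurs in `α`, and the minimum number of `V_S(a)` otherwise. -/
def chooseVal (α : EqSys) (S : DRS) (a : Attr) : Val :=
  if h : ∃ v, (a, v) ∈ α then Classical.choose h else some (sInf {n : ℕ | n ∈ VS S a})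

/-- The decision tree `Γ_α`. -/
def resTree (α : EqSys) (S : DRS) : DTree → DTree
  | .leaf Z => .leaf (Sres α Z)
  | .node a c =>
      if a ∈ AS (Sres α S) then .node a fun v => resTree α S (c v)
      else resTree α S (c (chooseVal α S a))

/-- The o-decision tree `o(Γ)`: remove all nodes reachable only via an edge labeled `*`. -/
def oTree : DTree → DTree
  | .leaf Z => .leaf Z
  | .node a c => .node a fun v => match v with
      | none => .leaf ∅
      | some x => oTree (c (some x))
theorem oTree_path_lift (S : DRS) :
    ∀ Γ K Z, PathT (Bo S) (oTree Γ) K Z → PathT (Be S) Γ K Z := by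
  intro Γ
  induction Γ with
  | leaf W =>
    intro K Z h
    rw [oTree] at h
    cases h
    exact .leaf W
  | node a c ih =>
    intro K Z h
    rw [oTree] at h
    cases h
    rename_i v K' hv hp
    obtain ⟨x, hx, rfl⟩ := Finset.mem_image.mp hv
    refine .node a c (some x) K' Z ?_ (ih (some x) K' Z ?_)
    · exact Finset.mem_insert.mpr (Or.inr hv)
    · simpa using hp

theorem oTree_over (S : DRS) :
    ∀ Γ, TreeOver (Be S) S Γ → TreeOver (Bo S) S (oTree Γ) := by
  intro Γ
  induction Γ with
  | leaf W => intro h; rw [oTree]; exact h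
  | node a c ih =>
    intro h
    rw [oTree]
    refine ⟨h.1, fun v hv => ?_⟩
    obtain ⟨x, hx, rfl⟩ := Finset.mem_image.mp hv
    exact ih (some x) (h.2 (some x) (Finset.mem_insert.mpr (Or.inr hv)))

/-- if an e-tree `Γ` solves `EC(S)` for `C ∈ {AR, AD, SR}`, then the
o-tree `o(Γ)` solves `C(S)`. -/
theorem stmt2 (S : DRS) (hS : WFS S) (cond : DRS → EqSys → DRS → Prop)
    (hc : cond = CondAR ∨ cond = CondAD ∨ cond = CondSR) (Γ : DTree)
    (hover : TreeOver (Be S) S Γ) (hsol : Solves (cond S) (Be S) Γ) :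
    TreeOver (Bo S) S (oTree Γ) ∧ Solves (cond S) (Bo S) (oTree Γ) := by
  refine ⟨oTree_over S Γ hover, fun K Z hp hcons => ?_⟩
  exact hsol K Z (oTree_path_lift S Γ K Z hp) hcons
end
end

section
/- Let S be a decision rule system with n(S)>0, C ∈ {EAR, EAD, ESR}, and α = {a_{i_1}=δ_1,…,a_{i_m}=δ_m} a consistent equation system with a_{i_j} ∈ A(S) and δ_j ∈ EV_S(a_{i_j}). If a decision tree Γ over S solves C(S) and the restricted rule system S_α is nonempty, then the restricted decision tree Γ_α solves C(S_α). -/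
open scoped Classical
noncomputable section

/-! ### Auxiliary lemmas for stmt4 -/

lemma fst_mem_Ar {p : Attr × Val} {r : Rule} (hp : p ∈ Kr r) : p.1 ∈ Ar r := by
  simp only [Kr, Finset.mem_image] at hp
  obtain ⟨q, hq, rfl⟩ := hp
  exact Finset.mem_image_of_mem _ hq

lemma Ar_mem_AS {a : Attr} {s : Rule} {T : DRS} (hs : s ∈ T) (ha : a ∈ Ar s) :
    a ∈ AS T := Finset.mem_biUnion.mpr ⟨s, hs, ha⟩

lemma mem_Sres_of {α : EqSys} {T : DRS} {r : Rule} (hr : r ∈ T)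
    (hrα : Consistent (Kr r ∪ α)) : resRule α r ∈ Sres α T :=
  Finset.mem_image_of_mem _ (Finset.mem_filter.mpr ⟨hr, hrα⟩)

lemma Kr_resRule_subset (α : EqSys) (r : Rule) : Kr (resRule α r) ⊆ Kr r :=
  Finset.image_subset_image (Finset.filter_subset _ _)

lemma Be_Sres_subset (α : EqSys) (S : DRS) (a : Attr) :
    Be (Sres α S) a ⊆ Be S a := by
  intro v hv
  simp only [Be, Bo, Finset.mem_insert, Finset.mem_image] at hv ⊢
  rcases hv with rfl | ⟨x, hx, rfl⟩
  · exact Or.inl rfl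
  · refine Or.inr ⟨x, ?_, rfl⟩
    simp only [VS, Finset.mem_biUnion, Finset.mem_image, Finset.mem_filter] at hx ⊢
    obtain ⟨s, hs, p, ⟨hp, hpa⟩, hpx⟩ := hx
    simp only [Sres, Finset.mem_image, Finset.mem_filter] at hs
    obtain ⟨r, ⟨hr, _⟩, rfl⟩ := hs
    exact ⟨r, hr, p, ⟨(Finset.mem_filter.mp hp).1, hpa⟩, hpx⟩

lemma VS_nonempty {S : DRS} {a : Attr} (ha : a ∈ AS S) : (VS S a).Nonempty := by
  simp only [AS, Finset.mem_biUnion, Ar, Finset.mem_image] at ha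
  obtain ⟨r, hr, p, hp, rfl⟩ := ha
  exact ⟨p.2, by
    simp only [VS, Finset.mem_biUnion, Finset.mem_image, Finset.mem_filter]
    exact ⟨r, hr, p, ⟨hp, rfl⟩, rfl⟩⟩

lemma chooseVal_mem_Be {α : EqSys} {S : DRS}
    (hα : ∀ p ∈ α, p.1 ∈ AS S ∧ p.2 ∈ Be S p.1) {a : Attr} (ha : a ∈ AS S) :
    chooseVal α S a ∈ Be S a := by
  unfold chooseVal
  split
  · next h => exact (hα (a, Classical.choose h) (Classical.choose_spec h)).2
  · have hne : {n : ℕ | n ∈ VS S a}.Nonempty := by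
      obtain ⟨x, hx⟩ := VS_nonempty ha
      exact ⟨x, hx⟩
    have : sInf {n : ℕ | n ∈ VS S a} ∈ VS S a := Nat.sInf_mem hne
    exact Finset.mem_insert_of_mem (Finset.mem_image_of_mem _ this)

lemma chooseVal_eq {α : EqSys} (hcons : Consistent α) (S : DRS) {a : Attr} {w : Val}
    (hw : (a, w) ∈ α) : chooseVal α S a = w := by
  have hex : ∃ v, (a, v) ∈ α := ⟨w, hw⟩
  rw [chooseVal, dif_pos hex]
  exact hcons (a, Classical.choose hex) (Classical.choose_spec hex) (a, w) hw rfl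

lemma alpha_attr_notMem {α : EqSys} {S : DRS} {a : Attr} {w : Val}
    (hw : (a, w) ∈ α) : a ∉ AS (Sres α S) := by
  intro ha
  simp only [AS, Finset.mem_biUnion] at ha
  obtain ⟨s, hs, has⟩ := ha
  simp only [Sres, Finset.mem_image, Finset.mem_filter] at hs
  obtain ⟨r, ⟨hr, hrα⟩, rfl⟩ := hs
  simp only [Ar, resRule, Finset.mem_image] at has
  obtain ⟨p, hp, rfl⟩ := has
  rw [Finset.mem_filter] at hp
  obtain ⟨hp1, hp2⟩ := hp
  have h1 : (p.1, (some p.2 : Val)) ∈ Kr r ∪ α :=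
    Finset.mem_union_left _ (Finset.mem_image_of_mem _ hp1)
  have h2 : (p.1, w) ∈ Kr r ∪ α := Finset.mem_union_right _ hw
  have h3 : (some p.2 : Val) = w := hrα _ h1 _ h2 rfl
  rw [← h3] at hw
  exact hp2 hw

/-- Path-lifting lemma: any path in `Γ_α` lifts to a path in `Γ`. -/
lemma lift_path {α : EqSys} {S : DRS}
    (hα : ∀ p ∈ α, p.1 ∈ AS S ∧ p.2 ∈ Be S p.1) :
    ∀ Γ : DTree, TreeOver (Be S) S Γ → ∀ K Z,
      PathT (Be (Sres α S)) (resTree α S Γ) K Z →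
      ∃ K' Z', PathT (Be S) Γ K' Z' ∧ Z = Sres α Z' ∧ Z' ⊆ S ∧ K ⊆ K' ∧
        (∀ p ∈ K, p.1 ∈ AS (Sres α S)) ∧
        (∀ p ∈ K', p ∈ K ∨ (p.1 ∉ AS (Sres α S) ∧ p.2 = chooseVal α S p.1)) := by
  intro Γ
  induction Γ with
  | leaf Z0 =>
    intro hover K Z hpath
    simp only [resTree] at hpath
    cases hpath
    exact ⟨∅, Z0, PathT.leaf Z0, rfl, hover, Finset.Subset.refl _, by simp, by simp⟩
  | node a c ih =>
    intro hover K Z hpath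
    obtain ⟨haS, hc⟩ := hover
    by_cases hmem : a ∈ AS (Sres α S)
    · rw [resTree, if_pos hmem] at hpath
      cases hpath with
      | node _ _ v K0 Z hv hp =>
        have hvS : v ∈ Be S a := Be_Sres_subset α S a hv
        obtain ⟨K', Z', h1, h2, h3, h4, h5, h6⟩ := ih v (hc v hvS) K0 Z hp
        refine ⟨insert (a, v) K', Z', PathT.node a c v K' Z' hvS h1, h2, h3,
          Finset.insert_subset_insert _ h4, ?_, ?_⟩
        · intro p hp'
          rcases Finset.mem_insert.mp hp' with rfl | hp'
          · exact hmem
          · exact h5 p hp'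
        · intro p hp'
          rcases Finset.mem_insert.mp hp' with rfl | hp'
          · exact Or.inl (Finset.mem_insert_self _ _)
          · rcases h6 p hp' with h | h
            · exact Or.inl (Finset.mem_insert_of_mem h)
            · exact Or.inr h
    · rw [resTree, if_neg hmem] at hpath
      have hcv : chooseVal α S a ∈ Be S a := chooseVal_mem_Be hα haS
      obtain ⟨K', Z', h1, h2, h3, h4, h5, h6⟩ := ih (chooseVal α S a) (hc _ hcv) K Z hpath
      refine ⟨insert (a, chooseVal α S a) K', Z',
        PathT.node a c _ K' Z' hcv h1, h2, h3, h4.trans (Finset.subset_insert _ _), h5, ?_⟩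
      intro p hp'
      rcases Finset.mem_insert.mp hp' with rfl | hp'
      · exact Or.inr ⟨hmem, rfl⟩
      · exact h6 p hp'

lemma cons_lift {α : EqSys} {S : DRS} {K K' : EqSys}
    (hK : ∀ p ∈ K, p.1 ∈ AS (Sres α S))
    (hK' : ∀ p ∈ K', p ∈ K ∨ (p.1 ∉ AS (Sres α S) ∧ p.2 = chooseVal α S p.1))
    (h : Consistent K) : Consistent K' := by
  intro p hp q hq hpq
  rcases hK' p hp with hp1 | ⟨hp1, hp2⟩ <;> rcases hK' q hq with hq1 | ⟨hq1, hq2⟩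
  · exact h p hp1 q hq1 hpq
  · exact absurd (hpq ▸ hK p hp1) hq1
  · exact absurd (hK q hq1) (hpq ▸ hp1)
  · rw [hp2, hq2, hpq]

/-- Negative-direction consistency: lifting consistency from `K` to `K'`. -/
lemma neg_cons {α : EqSys} {S : DRS} (hcons : Consistent α) {K K' : EqSys}
    (hK : ∀ p ∈ K, p.1 ∈ AS (Sres α S))
    (hK' : ∀ p ∈ K', p ∈ K ∨ (p.1 ∉ AS (Sres α S) ∧ p.2 = chooseVal α S p.1))
    {r : Rule} (hr : r ∈ S) (hrα : Consistent (Kr r ∪ α))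
    (h : Consistent (Kr (resRule α r) ∪ K)) :
    Consistent (Kr r ∪ K') := by
  have hclass : ∀ x ∈ Kr r ∪ K',
      x ∈ Kr (resRule α r) ∪ K ∨ (x.1 ∉ AS (Sres α S) ∧ x.2 = chooseVal α S x.1) := by
    intro x hx
    rcases Finset.mem_union.mp hx with hx | hx
    · simp only [Kr, Finset.mem_image] at hx
      obtain ⟨p, hp, rfl⟩ := hx
      by_cases hpα : (p.1, (some p.2 : Val)) ∈ α
      · exact Or.inr ⟨alpha_attr_notMem hpα, (chooseVal_eq hcons S hpα).symm⟩
      · refine Or.inl (Finset.mem_union_left _ ?_)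
        exact Finset.mem_image_of_mem _ (Finset.mem_filter.mpr ⟨hp, hpα⟩)
    · rcases hK' x hx with h1 | h1
      · exact Or.inl (Finset.mem_union_right _ h1)
      · exact Or.inr h1
  have hA : ∀ x ∈ Kr (resRule α r) ∪ K, x.1 ∈ AS (Sres α S) := by
    intro x hx
    rcases Finset.mem_union.mp hx with hx | hx
    · exact Ar_mem_AS (mem_Sres_of hr hrα) (fst_mem_Ar hx)
    · exact hK x hx
  intro p hp q hq hpq
  rcases hclass p hp with hp1 | ⟨hp1, hp2⟩ <;> rcases hclass q hq with hq1 | ⟨hq1, hq2⟩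
  · exact h p hp1 q hq1 hpq
  · exact absurd (hpq ▸ hA p hp1) hq1
  · exact absurd (hA q hq1) (hpq ▸ hp1)
  · rw [hp2, hq2, hpq]

/-- Every rule contained in `K'` is consistent with `α`. -/
lemma Z_rule_cons {α : EqSys} {S : DRS} (hcons : Consistent α) {K K' : EqSys}
    (hK : ∀ p ∈ K, p.1 ∈ AS (Sres α S))
    (hK' : ∀ p ∈ K', p ∈ K ∨ (p.1 ∉ AS (Sres α S) ∧ p.2 = chooseVal α S p.1))
    (hK'cons : Consistent K') {r' : Rule} (hsub : Kr r' ⊆ K') :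
    Consistent (Kr r' ∪ α) := by
  intro p hp q hq hpq
  rcases Finset.mem_union.mp hp with hp1 | hp1 <;> rcases Finset.mem_union.mp hq with hq1 | hq1
  · exact hK'cons p (hsub hp1) q (hsub hq1) hpq
  · rcases hK' p (hsub hp1) with h1 | ⟨h1, h2⟩
    · exact absurd (hpq ▸ hK p h1) (by
        have : (q.1, q.2) ∈ α := by simpa using hq1
        exact alpha_attr_notMem this)
    · have : (q.1, q.2) ∈ α := by simpa using hq1
      rw [h2, hpq, chooseVal_eq hcons S this]
  · rcases hK' q (hsub hq1) with h1 | ⟨h1, h2⟩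
    · exact absurd (hK q h1) (hpq ▸ (by
        have : (p.1, p.2) ∈ α := by simpa using hp1
        exact alpha_attr_notMem this))
    · have : (p.1, p.2) ∈ α := by simpa using hp1
      rw [h2, ← hpq, chooseVal_eq hcons S this]
  · exact hcons p hp1 q hq1 hpq

/-- if an e-tree `Γ` solves `C(S)` for `C ∈ {EAR, EAD, ESR}` and
`S_α ≠ ∅`, then `Γ_α` solves `C(S_α)`. -/
theorem stmt4 (S : DRS) (hS : WFS S) (hn : 0 < nS S) (cond : DRS → EqSys → DRS → Prop)
    (hc : cond = CondAR ∨ cond = CondAD ∨ cond = CondSR)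
    (α : EqSys) (hcons : Consistent α)
    (hα : ∀ p ∈ α, p.1 ∈ AS S ∧ p.2 ∈ Be S p.1)
    (Γ : DTree) (hover : TreeOver (Be S) S Γ) (hsol : Solves (cond S) (Be S) Γ)
    (hne : (Sres α S).Nonempty) :
    Solves (cond (Sres α S)) (Be (Sres α S)) (resTree α S Γ) := by
  intro K Z hpath hKcons
  obtain ⟨K', Z', hp', rfl, hZ'S, hKK', hKattr, hK'c⟩ := lift_path hα Γ hover K Z hpath
  have hK'cons : Consistent K' := cons_lift hKattr hK'c hKcons
  have hcondS := hsol K' Z' hp' hK'cons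
  have hpos : ∀ r' ∈ Z', Kr r' ⊆ K' := by
    rcases hc with h | h | h <;> rw [h] at hcondS <;> exact hcondS.1
  have hposRes : ∀ s ∈ Sres α Z', Kr s ⊆ K := by
    intro s hs p hp
    simp only [Sres, Finset.mem_image, Finset.mem_filter] at hs
    obtain ⟨r', ⟨hr', hr'α⟩, rfl⟩ := hs
    have hpK' : p ∈ K' := hpos r' hr' (Kr_resRule_subset α r' hp)
    rcases hK'c p hpK' with h | ⟨h, _⟩
    · exact h
    · exact absurd (Ar_mem_AS (mem_Sres_of (hZ'S hr') hr'α) (fst_mem_Ar hp)) h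
  have hZmem : ∀ r' ∈ Z', resRule α r' ∈ Sres α Z' := fun r' hr' =>
    mem_Sres_of hr' (Z_rule_cons hcons hKattr hK'c hK'cons (hpos r' hr'))
  rcases hc with rfl | rfl | rfl <;> refine ⟨hposRes, ?_⟩
  · -- CondAR
    intro s hs hsZ habs
    simp only [Sres, Finset.mem_image, Finset.mem_filter] at hs
    obtain ⟨r, ⟨hr, hrα⟩, rfl⟩ := hs
    have hrZ' : r ∉ Z' := fun h => hsZ (hZmem r h)
    exact hcondS.2 r hr hrZ' (neg_cons hcons hKattr hK'c hr hrα habs)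
  · -- CondAD
    intro s hs hsZ habs
    simp only [Sres, Finset.mem_image, Finset.mem_filter] at hs
    obtain ⟨r, ⟨hr, hrα⟩, rfl⟩ := hs
    have hrZ' : r.2 ∉ Z'.image Prod.snd := by
      intro h
      obtain ⟨r', hr', hr'2⟩ := Finset.mem_image.mp h
      exact hsZ (Finset.mem_image.mpr ⟨resRule α r', hZmem r' hr', hr'2⟩)
    exact hcondS.2 r hr hrZ' (neg_cons hcons hKattr hK'c hr hrα habs)
  · -- CondSR
    intro hZ s hs habs
    simp only [Sres, Finset.mem_image, Finset.mem_filter] at hs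
    obtain ⟨r, ⟨hr, hrα⟩, rfl⟩ := hs
    have hZ' : Z' = ∅ := Finset.eq_empty_iff_forall_notMem.mpr fun r' hr' =>
      Finset.eq_empty_iff_forall_notMem.mp hZ _ (hZmem r' hr')
    exact hcondS.2 hZ' r hr (neg_cons hcons hKattr hK'c hr hrα habs)
end
end

section
/- For any decision rule system S: (a) if C ∈ {EAR, AR}, then h_C(S) ≥ β(S); (b) if C ∈ {AD, SR}, then h_{EC}(S) ≥ β(I_C(S)); (c) if C ∈ {AD, SR} and S is incomplete, then h_C(S) ≥ β(S), where β denotes the minimum cardinality of a node cover of the associated hypergraph. -/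
open scoped Classical
noncomputable section

/-!
Fix one value `g a` in the branching set of every attribute and follow, in an optimal decision
tree, the path that answers `g a` to every query. Its equation system `K` is consistent and mentions
at most depth-many attributes, so it suffices that these attributes cover every nonempty edge of
the hypergraph. A rule whose left-hand side is contained in `K` is covered trivially; a rule
inconsistent with `K` must disagree with `K` on one of its own attributes. For AR every rule is
of one of these two kinds. For the other problems `g` is chosen so that few rules can be
contained in `K`: answering `*` on e-trees leaves only length-0 rules, which `I_SR` and `I_AD`
are designed to discount, and answering the tuple witnessing incompleteness on o-trees leaves
none.
-/

open Finset

section Basic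

lemma mem_AS {S : DRS} {a : Attr} : a ∈ AS S ↔ ∃ r ∈ S, a ∈ Ar r := by
  simp [AS]

lemma mem_Ar {r : Rule} {a : Attr} : a ∈ Ar r ↔ ∃ p ∈ r.1, p.1 = a := by
  simp [Ar]

lemma mem_Kr {r : Rule} {p : Attr × Val} : p ∈ Kr r ↔ ∃ q ∈ r.1, (q.1, some q.2) = p := by
  simp [Kr]

lemma fst_mem_Ar_of_mem_Kr {r : Rule} {p : Attr × Val} (hp : p ∈ Kr r) : p.1 ∈ Ar r := by
  obtain ⟨q, hq, rfl⟩ := mem_Kr.1 hp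
  exact mem_Ar.2 ⟨q, hq, rfl⟩

lemma Ar_eq_empty {r : Rule} : Ar r = ∅ ↔ r.1 = ∅ := by
  simp [Ar]

lemma exists_forall_mem_Bo (S : DRS) : ∃ g : Attr → Val, ∀ a ∈ AS S, g a ∈ Bo S a := by
  refine ⟨fun a => some (sInf (VS S a : Set ℕ)), fun a ha => mem_image_of_mem _ ?_⟩
  obtain ⟨r, hr, har⟩ := mem_AS.1 ha
  obtain ⟨p, hp, rfl⟩ := mem_Ar.1 har
  have hv : p.2 ∈ VS S p.1 := mem_biUnion.2 ⟨r, hr, mem_image.2 ⟨p, mem_filter.2 ⟨hp, rfl⟩, rfl⟩⟩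
  exact Nat.sInf_mem ⟨p.2, hv⟩

end Basic

section Consistency

def assignEqs (s : Finset Attr) (g : Attr → Val) : EqSys := s.image fun a => (a, g a)

lemma Consistent.mono {K K' : EqSys} (h : K ⊆ K') (hK' : Consistent K') : Consistent K :=
  fun p hp q hq => hK' p (h hp) q (h hq)

lemma consistent_assignEqs (s : Finset Attr) (g : Attr → Val) : Consistent (assignEqs s g) := by
  intro p hp q hq hpq
  obtain ⟨a, -, rfl⟩ := mem_image.1 hp
  obtain ⟨b, -, rfl⟩ := mem_image.1 hq
  simp_all

lemma consistent_Kr {r : Rule} (hr : WFRule r) : Consistent (Kr r) := by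
  intro p hp q hq hpq
  obtain ⟨p', hp', rfl⟩ := mem_Kr.1 hp
  obtain ⟨q', hq', rfl⟩ := mem_Kr.1 hq
  simpa using hr p' hp' q' hq' hpq

lemma Ar_inter_nonempty_of_not_consistent {r : Rule} {K : EqSys} (hr : WFRule r)
    (hK : Consistent K) (h : ¬ Consistent (Kr r ∪ K)) :
    (Ar r ∩ K.image Prod.fst).Nonempty := by
  have hr := consistent_Kr hr
  simp only [Consistent, mem_union, not_forall] at h
  obtain ⟨p, hp, q, hq, hpq, hne⟩ := h
  rcases hp with hp | hp <;> rcases hq with hq | hq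
  · exact absurd (hr p hp q hq hpq) hne
  · exact ⟨p.1, mem_inter.2 ⟨fst_mem_Ar_of_mem_Kr hp, hpq ▸ mem_image_of_mem _ hq⟩⟩
  · exact ⟨q.1, mem_inter.2 ⟨fst_mem_Ar_of_mem_Kr hq, hpq ▸ mem_image_of_mem _ hp⟩⟩
  · exact absurd (hK p hp q hq hpq) hne

lemma Ar_inter_nonempty_of_Kr_subset {r : Rule} {K : EqSys} (h : Kr r ⊆ K) (hr : Ar r ≠ ∅) :
    (Ar r ∩ K.image Prod.fst).Nonempty := by
  obtain ⟨p, hp⟩ := nonempty_iff_ne_empty.2 (Ar_eq_empty.not.1 hr)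
  exact ⟨p.1, mem_inter.2 ⟨mem_Ar.2 ⟨p, hp, rfl⟩,
    mem_image_of_mem Prod.fst (h (mem_image_of_mem _ hp))⟩⟩

lemma eq_empty_of_Kr_subset_assignEqs_none {r : Rule} {K : EqSys} {s : Finset Attr}
    (h : Kr r ⊆ K) (hK : K ⊆ assignEqs s fun _ => none) : r.1 = ∅ := by
  refine eq_empty_of_forall_notMem fun p hp => ?_
  obtain ⟨a, -, ha⟩ := mem_image.1 (hK (h (mem_image_of_mem _ hp)))
  simp at ha

end Consistency

section Trees

lemma exists_path_assignEqs {B : Attr → Finset Val} {S : DRS} {g : Attr → Val}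
    (hg : ∀ a ∈ AS S, g a ∈ B a) {Γ : DTree} (hΓ : TreeOver B S Γ) :
    ∃ K Z, PathT B Γ K Z ∧ Z ⊆ S ∧ K ⊆ assignEqs (AS S) g ∧ K.card ≤ depthT B Γ := by
  induction Γ with
  | leaf Z => exact ⟨∅, Z, .leaf Z, hΓ, empty_subset _, by simp [depthT]⟩
  | node a c ih =>
    obtain ⟨ha, hc⟩ := hΓ
    obtain ⟨K, Z, hp, hZ, hK, hcard⟩ := ih (g a) (hc _ (hg a ha))
    refine ⟨insert (a, g a) K, Z, .node a c _ K Z (hg a ha) hp, hZ,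
      insert_subset (mem_image_of_mem _ ha) hK, ?_⟩
    calc (insert (a, g a) K).card ≤ K.card + 1 := card_insert_le _ _
      _ ≤ depthT B (c (g a)) + 1 := by omega
      _ ≤ depthT B (.node a c) :=
        Nat.add_le_add_right (le_sup (f := fun v => depthT B (c v)) (hg a ha)) 1

def fullTree (S : DRS) : EqSys → List Attr → DTree
  | K₀, [] => .leaf (S.filter fun r => Kr r ⊆ K₀)
  | K₀, a :: L => .node a fun v => fullTree S (insert (a, v) K₀) L

lemma treeOver_fullTree (S : DRS) (B : Attr → Finset Val) {L : List Attr} (hL : ∀ a ∈ L, a ∈ AS S)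
    (K₀ : EqSys) : TreeOver B S (fullTree S K₀ L) := by
  induction L generalizing K₀ with
  | nil => exact filter_subset _ _
  | cons a L ih =>
    exact ⟨hL a List.mem_cons_self, fun v _ => ih (fun b hb => hL b (List.mem_cons_of_mem _ hb)) _⟩

lemma pathT_fullTree {S : DRS} {B : Attr → Finset Val} {L : List Attr} {K₀ K : EqSys} {Z : DRS}
    (h : PathT B (fullTree S K₀ L) K Z) :
    Z = S.filter (fun r => Kr r ⊆ K ∪ K₀) ∧ ∀ a ∈ L, ∃ v, (a, v) ∈ K := by
  induction L generalizing K₀ K with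
  | nil =>
    cases h
    simp
  | cons a L ih =>
    cases h with
    | node _ _ v K _ _ hp =>
      obtain ⟨hZ, hL⟩ := ih hp
      refine ⟨by rw [hZ, union_insert, insert_union], fun b hb => ?_⟩
      rcases List.mem_cons.1 hb with rfl | hb
      · exact ⟨v, mem_insert_self _ _⟩
      · obtain ⟨w, hw⟩ := hL b hb
        exact ⟨w, mem_insert_of_mem hw⟩

lemma solves_fullTree (S : DRS) (B : Attr → Finset Val) :
    Solves (CondAR S) B (fullTree S ∅ (AS S).toList) := by
  intro K Z hp _
  obtain ⟨rfl, hL⟩ := pathT_fullTree hp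
  rw [union_empty]
  refine ⟨fun r hr => (mem_filter.1 hr).2, fun r hr hrZ hcons => hrZ (mem_filter.2 ⟨hr, ?_⟩)⟩
  intro p hp
  obtain ⟨v, hv⟩ := hL p.1 (mem_toList.2 (mem_AS.2 ⟨r, hr, fst_mem_Ar_of_mem_Kr hp⟩))
  have hpv : p.2 = v := hcons p (mem_union_left _ hp) (p.1, v) (mem_union_right _ hv) rfl
  rwa [← hpv] at hv

end Trees

lemma CondAR.condSR {S Z : DRS} {K : EqSys} (h : CondAR S K Z) : CondSR S K Z :=
  ⟨h.1, fun hZ r hr => h.2 r hr (by simp [hZ])⟩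

lemma CondAR.condAD {S Z : DRS} {K : EqSys} (h : CondAR S K Z) : CondAD S K Z :=
  ⟨h.1, fun r hr hd => h.2 r hr fun hrZ => hd (mem_image_of_mem _ hrZ)⟩

/-- Since the tree querying every attribute solves AR, the `sInf` defining `hgen cond B S` is
attained (rather than the junk value `sInf ∅ = 0`). -/
theorem nodeCoverNum_le_hgen {cond : DRS → EqSys → DRS → Prop} {B : DRS → Attr → Finset Val}
    {S T : DRS} (g : Attr → Val) (hg : ∀ a ∈ AS S, g a ∈ B S a)
    (hcond : ∀ K Z, CondAR S K Z → cond S K Z)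
    (hcover : ∀ K Z, Z ⊆ S → K ⊆ assignEqs (AS S) g → cond S K Z →
      ∀ r ∈ T, Ar r ≠ ∅ → (Ar r ∩ K.image Prod.fst).Nonempty) :
    nodeCoverNum T ≤ hgen cond B S := by
  have hne : {m | ∃ Γ, TreeOver (B S) S Γ ∧ Solves (cond S) (B S) Γ ∧ depthT (B S) Γ = m}.Nonempty :=
    ⟨_, _, treeOver_fullTree S (B S) (fun a ha => mem_toList.1 ha) ∅,
      fun K Z hp hK => hcond K Z (solves_fullTree S (B S) K Z hp hK), rfl⟩
  obtain ⟨Γ, hΓ, hsolves, hdepth⟩ := Nat.sInf_mem hne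
  obtain ⟨K, Z, hp, hZ, hK, hcard⟩ := exists_path_assignEqs hg hΓ
  have hcons : Consistent K := (consistent_assignEqs _ g).mono hK
  have hcov : NodeCover T (K.image Prod.fst ∩ AS T) := by
    refine ⟨inter_subset_right, fun r hr hAr => ?_⟩
    obtain ⟨a, ha⟩ := hcover K Z hZ hK (hsolves K Z hp hcons) r hr hAr
    exact ⟨a, by simp only [mem_inter] at ha ⊢; exact ⟨ha.1, ha.2, mem_AS.2 ⟨r, hr, ha.1⟩⟩⟩
  calc nodeCoverNum T ≤ (K.image Prod.fst ∩ AS T).card := Nat.sInf_le ⟨_, hcov, rfl⟩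
    _ ≤ K.card := (card_le_card inter_subset_left).trans card_image_le
    _ ≤ hgen cond B S := hcard.trans hdepth.le

section Covers

variable {S Z : DRS} {K : EqSys}

lemma cover_of_condAR (hS : ∀ r ∈ S, WFRule r) (hK : Consistent K) (h : CondAR S K Z) :
    ∀ r ∈ S, Ar r ≠ ∅ → (Ar r ∩ K.image Prod.fst).Nonempty := fun r hr hAr =>
  if hrZ : r ∈ Z then Ar_inter_nonempty_of_Kr_subset (h.1 r hrZ) hAr
  else Ar_inter_nonempty_of_not_consistent (hS r hr) hK (h.2 r hr hrZ)

lemma cover_ISR_of_condSR (hS : ∀ r ∈ S, WFRule r) (hZ : Z ⊆ S)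
    (hK : K ⊆ assignEqs (AS S) fun _ => none) (h : CondSR S K Z) :
    ∀ r ∈ ISR S, Ar r ≠ ∅ → (Ar r ∩ K.image Prod.fst).Nonempty := by
  intro r hr hAr
  unfold ISR at hr
  split_ifs at hr with hlen
  · have hZ : Z = ∅ := eq_empty_of_forall_notMem fun r' hr' =>
      hlen r' (hZ hr') (eq_empty_of_Kr_subset_assignEqs_none (h.1 r' hr') hK)
    exact Ar_inter_nonempty_of_not_consistent (hS r hr)
      ((consistent_assignEqs _ _).mono hK) (h.2 hZ r hr)
  · exact absurd (Ar_eq_empty.2 (mem_filter.1 hr).2) hAr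

lemma cover_IAD_of_condAD (hS : ∀ r ∈ S, WFRule r) (hZ : Z ⊆ S)
    (hK : K ⊆ assignEqs (AS S) fun _ => none) (h : CondAD S K Z) :
    ∀ r ∈ IAD S, Ar r ≠ ∅ → (Ar r ∩ K.image Prod.fst).Nonempty := by
  intro r hr hAr
  obtain ⟨hrS, hr0 | hD0⟩ := mem_filter.1 hr
  · exact absurd (Ar_eq_empty.2 hr0) hAr
  have hdec : r.2 ∉ Z.image Prod.snd := fun hmem => by
    obtain ⟨r', hr', hr'2⟩ := mem_image.1 hmem
    exact hD0 (mem_image.2 ⟨r', mem_filter.2 ⟨hZ hr',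
      eq_empty_of_Kr_subset_assignEqs_none (h.1 r' hr') hK⟩, hr'2⟩)
  exact Ar_inter_nonempty_of_not_consistent (hS r hrS)
    ((consistent_assignEqs _ _).mono hK) (h.2 r hrS hdec)

variable {f : Attr → ℕ}

lemma eq_empty_of_subset_KStuple (hf : ∀ r ∈ S, ¬ Consistent (Kr r ∪ KStuple S f)) (hZ : Z ⊆ S) (hK : K ⊆ KStuple S f) (hZK : ∀ r ∈ Z, Kr r ⊆ K) :
    Z = ∅ :=
  eq_empty_of_forall_notMem fun r hr => hf r (hZ hr) <| by
    rw [union_eq_right.2 ((hZK r hr).trans hK)]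
    exact consistent_assignEqs _ _

lemma cover_of_condSR_of_incomplete (hf : ∀ r ∈ S, ¬ Consistent (Kr r ∪ KStuple S f))
    (hS : ∀ r ∈ S, WFRule r) (hZ : Z ⊆ S)
    (hK : K ⊆ KStuple S f) (h : CondSR S K Z) :
    ∀ r ∈ S, Ar r ≠ ∅ → (Ar r ∩ K.image Prod.fst).Nonempty := fun r hr _ =>
  Ar_inter_nonempty_of_not_consistent (hS r hr) ((consistent_assignEqs _ _).mono hK)
    (h.2 (eq_empty_of_subset_KStuple hf hZ hK h.1) r hr)

lemma cover_of_condAD_of_incomplete (hf : ∀ r ∈ S, ¬ Consistent (Kr r ∪ KStuple S f))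
    (hS : ∀ r ∈ S, WFRule r) (hZ : Z ⊆ S)
    (hK : K ⊆ KStuple S f) (h : CondAD S K Z) :
    ∀ r ∈ S, Ar r ≠ ∅ → (Ar r ∩ K.image Prod.fst).Nonempty := fun r hr _ =>
  Ar_inter_nonempty_of_not_consistent (hS r hr) ((consistent_assignEqs _ _).mono hK)
    (h.2 r hr (by simp [eq_empty_of_subset_KStuple hf hZ hK h.1]))

end Covers

/-- lower bounds via the node cover number `β`. -/
theorem stmt6 (S : DRS) (hS : WFS S) :
    (nodeCoverNum S ≤ hAR S ∧ nodeCoverNum S ≤ hEAR S) ∧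
    (nodeCoverNum (ISR S) ≤ hESR S ∧ nodeCoverNum (IAD S) ≤ hEAD S) ∧
    (IncompleteS S → nodeCoverNum S ≤ hSR S ∧ nodeCoverNum S ≤ hAD S) := by
  have hWF := hS.2
  obtain ⟨g, hg⟩ := exists_forall_mem_Bo S
  have hnone : ∀ a ∈ AS S, (none : Val) ∈ Be S a := fun a _ => mem_insert_self _ _
  refine ⟨⟨?_, ?_⟩, ⟨?_, ?_⟩, fun ⟨f, hfV, hf⟩ => ?_⟩
  · exact nodeCoverNum_le_hgen g hg (fun _ _ h => h)
      fun K _ _ hK h => cover_of_condAR hWF ((consistent_assignEqs _ g).mono hK) h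
  · exact nodeCoverNum_le_hgen g (fun a ha => mem_insert_of_mem (hg a ha)) (fun _ _ h => h)
      fun K _ _ hK h => cover_of_condAR hWF ((consistent_assignEqs _ g).mono hK) h
  · exact nodeCoverNum_le_hgen _ hnone (fun _ _ => CondAR.condSR)
      fun _ _ hZ hK => cover_ISR_of_condSR hWF hZ hK
  · exact nodeCoverNum_le_hgen _ hnone (fun _ _ => CondAR.condAD)
      fun _ _ hZ hK => cover_IAD_of_condAD hWF hZ hK
  have hfB : ∀ a ∈ AS S, some (f a) ∈ Bo S a := fun a ha => mem_image_of_mem _ (hfV a ha)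
  exact ⟨nodeCoverNum_le_hgen _ hfB (fun _ _ => CondAR.condSR)
      fun _ _ hZ hK => cover_of_condSR_of_incomplete hf hWF hZ hK,
    nodeCoverNum_le_hgen _ hfB (fun _ _ => CondAR.condAD)
      fun _ _ hZ hK => cover_of_condAD_of_incomplete hf hWF hZ hK⟩
end
end
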